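/- arXiv:1801.04713 — 2 statements merged into one kernel-verified Lean document; each statement's English description precedes it below -/
import Mathlib

section
/- For every ε > 0 and n ≥ 1 there exists a smooth convex function M : ℝ^{n+1} → ℝ, nondecreasing in every variable, such that (i) max(t₀,…,t_n) ≤ M(t₀,…,t_n) ≤ max(t₀,…,t_n) + ε for all t ∈ ℝ^{n+1}, and (iii) M(t₀+t, …, t_n+t) = M(t₀,…,t_n) + t for all t ∈ ℝ. -/
open Finset

open Real in
/-- Hölder step for convexity of log-sum-exp. -/
lemma lse_holder {m : ℕ} (a b : ℝ) (ha : 0 < a) (hb : 0 < b) (hab : a + b = 1)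
    (u v : Fin m → ℝ) :
    ∑ i, exp (a * u i + b * v i) ≤
      (∑ i, exp (u i)) ^ a * (∑ i, exp (v i)) ^ b := by
  have hpq : Real.HolderConjugate a⁻¹ b⁻¹ := by
    constructor
    · rw [inv_inv, inv_inv, inv_one]; exact hab
    · exact inv_pos.2 ha
    · exact inv_pos.2 hb
  have h := Real.inner_le_Lp_mul_Lq_of_nonneg (s := Finset.univ)
    (f := fun i => exp (a * u i)) (g := fun i => exp (b * v i)) hpq
    (fun i _ => (exp_pos _).le) (fun i _ => (exp_pos _).le)
  calc ∑ i, exp (a * u i + b * v i)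
      = ∑ i, exp (a * u i) * exp (b * v i) := by simp [exp_add]
    _ ≤ (∑ i, exp (a * u i) ^ a⁻¹) ^ (1 / a⁻¹) * (∑ i, exp (b * v i) ^ b⁻¹) ^ (1 / b⁻¹) := h
    _ = (∑ i, exp (u i)) ^ a * (∑ i, exp (v i)) ^ b := by
        rw [one_div, inv_inv, one_div, inv_inv]
        congr 2 <;> apply Finset.sum_congr rfl <;> intro i _
        · rw [← exp_mul]; field_simp
        · rw [← exp_mul]; field_simp

/-- For every ε > 0 and n ≥ 1 there is a smooth convex function M on ℝ^{n+1},
nondecreasing in every variable, with max ≤ M ≤ max + ε and the translation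
property M(t + c·1) = M(t) + c. -/
theorem exists_smooth_max (ε : ℝ) (hε : 0 < ε) (n : ℕ) (hn : 1 ≤ n) :
    ∃ M : (Fin (n + 1) → ℝ) → ℝ,
      ContDiff ℝ (⊤ : ℕ∞) M ∧
      ConvexOn ℝ Set.univ M ∧
      (∀ (t : Fin (n + 1) → ℝ) (i : Fin (n + 1)) (s : ℝ),
        t i ≤ s → M t ≤ M (Function.update t i s)) ∧
      (∀ t : Fin (n + 1) → ℝ,
        Finset.univ.sup' Finset.univ_nonempty t ≤ M t ∧
        M t ≤ Finset.univ.sup' Finset.univ_nonempty t + ε) ∧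
      (∀ (t : Fin (n + 1) → ℝ) (c : ℝ), M (fun i => t i + c) = M t + c) := by
  set L : ℝ := Real.log (n + 1) with hL
  have hL0 : 0 < L := by
    apply Real.log_pos
    have : (1 : ℝ) ≤ (n : ℝ) := by exact_mod_cast hn
    linarith
  set β : ℝ := ε / L with hβ
  have hβ0 : 0 < β := div_pos hε hL0
  set S : (Fin (n + 1) → ℝ) → ℝ := fun t => ∑ i, Real.exp (t i / β) with hS
  have hSpos : ∀ t, 0 < S t := fun t =>
    Finset.sum_pos (fun i _ => Real.exp_pos _) Finset.univ_nonempty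
  refine ⟨fun t => β * Real.log (S t), ?_, ?_, ?_, ?_, ?_⟩
  · -- smoothness
    apply ContDiff.mul contDiff_const
    apply ContDiff.log
    · exact ContDiff.sum fun i _ =>
        Real.contDiff_exp.comp ((contDiff_pi.mp contDiff_id i).div_const β)
    · exact fun t => (hSpos t).ne'
  · -- convexity
    refine ⟨convex_univ, fun x _ y _ a b ha hb hab => ?_⟩
    rcases ha.eq_or_lt with rfl | ha'
    · simp at hab; simp [hab]
    rcases hb.eq_or_lt with rfl | hb'
    · simp at hab; simp [hab]
    have key := lse_holder a b ha' hb' hab (fun i => x i / β) (fun i => y i / β)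
    have hx := hSpos x
    have hy := hSpos y
    have hax : S (a • x + b • y) ≤ S x ^ a * S y ^ b := by
      refine le_trans (le_of_eq ?_) key
      apply Finset.sum_congr rfl
      intro i _
      congr 1
      simp [Pi.add_apply, Pi.smul_apply, smul_eq_mul]
      ring
    have hlog : Real.log (S (a • x + b • y)) ≤ a * Real.log (S x) + b * Real.log (S y) := by
      calc Real.log (S (a • x + b • y)) ≤ Real.log (S x ^ a * S y ^ b) :=
            Real.log_le_log (hSpos _) hax
        _ = a * Real.log (S x) + b * Real.log (S y) := by
            rw [Real.log_mul (Real.rpow_pos_of_pos hx a).ne' (Real.rpow_pos_of_pos hy b).ne',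
              Real.log_rpow hx, Real.log_rpow hy]
    have := mul_le_mul_of_nonneg_left hlog hβ0.le
    simp only [smul_eq_mul]
    nlinarith [this]
  · -- monotone
    intro t i s his
    have : S t ≤ S (Function.update t i s) := by
      apply Finset.sum_le_sum
      intro j _
      rcases eq_or_ne j i with rfl | hji
      · simp only [Function.update_self]
        exact Real.exp_le_exp.2 (div_le_div_of_nonneg_right his hβ0.le)
      · simp [Function.update_of_ne hji]
    exact mul_le_mul_of_nonneg_left (Real.log_le_log (hSpos t) this) hβ0.le
  · -- bounds
    intro t
    set m : ℝ := Finset.univ.sup' Finset.univ_nonempty t with hm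
    obtain ⟨i0, _, hi0⟩ := Finset.exists_mem_eq_sup' Finset.univ_nonempty t
    constructor
    · have h1 : Real.exp (m / β) ≤ S t := by
        rw [hm, hi0]
        exact Finset.single_le_sum (f := fun i => Real.exp (t i / β))
          (fun i _ => (Real.exp_pos _).le) (Finset.mem_univ i0)
      have := mul_le_mul_of_nonneg_left (Real.log_le_log (Real.exp_pos _) h1) hβ0.le
      rw [Real.log_exp] at this
      rw [mul_div_cancel₀ _ hβ0.ne'] at this
      exact this
    · have h2 : S t ≤ (n + 1) * Real.exp (m / β) := by
        have : S t ≤ ∑ _i : Fin (n+1), Real.exp (m / β) := by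
          apply Finset.sum_le_sum
          intro j _
          exact Real.exp_le_exp.2 (div_le_div_of_nonneg_right
            (Finset.le_sup' t (Finset.mem_univ j)) hβ0.le)
        simpa [Finset.card_univ, mul_comm] using this
      have := mul_le_mul_of_nonneg_left (Real.log_le_log (hSpos t) h2) hβ0.le
      rw [Real.log_mul (by positivity) (Real.exp_ne_zero _), Real.log_exp] at this
      have hβL : β * L = ε := div_mul_cancel₀ ε hL0.ne'
      calc β * Real.log (S t) ≤ β * (Real.log (n+1) + m / β) := this
        _ = m + ε := by
            rw [mul_add, mul_div_cancel₀ _ hβ0.ne', ← hL, hβL]; ring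
  · -- translation
    intro t c
    have : S (fun i => t i + c) = Real.exp (c / β) * S t := by
      rw [hS, Finset.mul_sum]
      apply Finset.sum_congr rfl
      intro i _
      rw [← Real.exp_add]
      congr 1
      ring
    show β * Real.log (S fun i => t i + c) = β * Real.log (S t) + c
    rw [this, Real.log_mul (Real.exp_ne_zero _) (hSpos t).ne', Real.log_exp, mul_add,
      mul_div_cancel₀ _ hβ0.ne']
    ring
end

section
/- Let (f_k) be a sequence of convex functions on an open convex set U ⊆ ℝ^n that converges pointwise to a (necessarily convex) function f : U → ℝ. Then the convergence is uniform on every compact subset of U. -/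
open Filter Set Metric

/-- Local uniform-in-k upper bound near a point of an open set, for a family of
convex functions with a pointwise bound. -/
lemma aux_local_upper {n : ℕ} {U : Set (Fin n → ℝ)} (hU : IsOpen U)
    (fk : ℕ → (Fin n → ℝ) → ℝ)
    (hconv : ∀ k, ConvexOn ℝ U (fk k))
    (C : (Fin n → ℝ) → ℝ) (hC : ∀ x ∈ U, ∀ k, |fk k x| ≤ C x)
    {y : Fin n → ℝ} (hy : y ∈ U) :
    ∃ ρ M, 0 < ρ ∧ closedBall y ρ ⊆ U ∧ ∀ k, ∀ z ∈ closedBall y ρ, fk k z ≤ M := by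
  obtain ⟨ε, hε, hball⟩ := Metric.isOpen_iff.1 hU y hy
  set ρ := ε / 2 with hρdef
  have hρ : 0 < ρ := by positivity
  have hsub : closedBall y ρ ⊆ U :=
    (closedBall_subset_ball (by linarith)).trans hball
  set V : Set (Fin n → ℝ) := Set.pi Set.univ (fun i => ({y i - ρ, y i + ρ} : Set ℝ)) with hV
  have hVfin : V.Finite := Set.Finite.pi fun i => (Set.finite_singleton _).insert _
  have hVhull : convexHull ℝ V = closedBall y ρ := by
    rw [hV, convexHull_pi, closedBall_pi _ hρ.le]
    refine Set.pi_congr rfl fun i _ => ?_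
    rw [convexHull_pair, segment_eq_Icc (by linarith), Real.closedBall_eq_Icc]
  have hVne : V.Nonempty := ⟨fun i => y i - ρ, fun i _ => Or.inl rfl⟩
  set t : Finset (Fin n → ℝ) := hVfin.toFinset with ht
  have htV : (t : Set (Fin n → ℝ)) = V := hVfin.coe_toFinset
  have htne : t.Nonempty := by
    rw [← Finset.coe_nonempty, htV]; exact hVne
  have htU : (t : Set (Fin n → ℝ)) ⊆ U := by
    rw [htV]
    exact (subset_convexHull ℝ V).trans (hVhull ▸ hsub)
  refine ⟨ρ, t.sup' htne C, hρ, hsub, fun k z hz => ?_⟩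
  have hzhull : z ∈ convexHull ℝ (t : Set (Fin n → ℝ)) := by
    rw [htV, hVhull]; exact hz
  have h1 := (hconv k).le_sup_of_mem_convexHull htU hzhull
  obtain ⟨v, hv, hveq⟩ := Finset.exists_mem_eq_sup' _ (fk k)
  calc fk k z ≤ _ := h1
    _ = fk k v := hveq
    _ ≤ |fk k v| := le_abs_self _
    _ ≤ C v := hC v (htU hv) k
    _ ≤ t.sup' htne C := Finset.le_sup' C hv

/-- Uniform-in-k upper bound on a compact subset. -/
lemma aux_upper_compact {n : ℕ} {U : Set (Fin n → ℝ)} (hU : IsOpen U)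
    (fk : ℕ → (Fin n → ℝ) → ℝ)
    (hconv : ∀ k, ConvexOn ℝ U (fk k))
    (C : (Fin n → ℝ) → ℝ) (hC : ∀ x ∈ U, ∀ k, |fk k x| ≤ C x)
    {K' : Set (Fin n → ℝ)} (hK' : IsCompact K') (hKU : K' ⊆ U) (hne : K'.Nonempty) :
    ∃ M, ∀ k, ∀ y ∈ K', fk k y ≤ M := by
  have h : ∀ x, x ∈ K' → ∃ ρ M, 0 < ρ ∧ closedBall x ρ ⊆ U ∧
      ∀ k, ∀ z ∈ closedBall x ρ, fk k z ≤ M :=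
    fun x hx => aux_local_upper hU fk hconv C hC (hKU hx)
  choose! ρ M hρ hsub hM using h
  obtain ⟨t, htK, hcov⟩ := hK'.elim_nhds_subcover (fun x => ball x (ρ x))
    (fun x hx => ball_mem_nhds x (hρ x hx))
  obtain ⟨y₀, hy₀⟩ := hne
  have htne : t.Nonempty := by
    obtain ⟨c, hc⟩ := Set.mem_iUnion₂.1 (hcov hy₀)
    exact ⟨c, hc.1⟩
  refine ⟨t.sup' htne M, fun k y hy => ?_⟩
  obtain ⟨c, hc, hyc⟩ := Set.mem_iUnion₂.1 (hcov hy)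
  calc fk k y ≤ M c := hM c (htK c hc) k y (ball_subset_closedBall hyc)
    _ ≤ t.sup' htne M := Finset.le_sup' M hc

/-- A sequence of convex functions on an open convex subset U of ℝ^n that
converges pointwise to a function f converges uniformly on every compact subset
of U. -/
theorem convex_pointwise_to_locally_uniform (n : ℕ)
    (U : Set (Fin n → ℝ)) (hUopen : IsOpen U) (hUconv : Convex ℝ U)
    (fk : ℕ → (Fin n → ℝ) → ℝ) (f : (Fin n → ℝ) → ℝ)
    (hconv : ∀ k, ConvexOn ℝ U (fk k))
    (hpt : ∀ x ∈ U, Tendsto (fun k => fk k x) atTop (nhds (f x))) :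
    ∀ K : Set (Fin n → ℝ), K ⊆ U → IsCompact K →
      TendstoUniformlyOn fk f atTop K := by
  intro K hKU hK
  rcases K.eq_empty_or_nonempty with rfl | ⟨y₀, hy₀⟩
  · exact tendstoUniformlyOn_empty
  obtain ⟨δ, hδ, hsubU⟩ := hK.exists_cthickening_subset_open hUopen hKU
  set r := δ / 4 with hrdef
  have hr : 0 < r := by positivity
  -- basic facts about thickenings
  have hTsub : ∀ a, a ≤ δ → cthickening a K ⊆ U :=
    fun a ha => (cthickening_mono ha K).trans hsubU
  have hext : ∀ a, 0 ≤ a → ∀ y ∈ cthickening a K, ∃ x ∈ K, dist y x ≤ a := by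
    intro a ha y hy
    rw [hK.cthickening_eq_biUnion_closedBall ha] at hy
    obtain ⟨x, hx, hyx⟩ := Set.mem_iUnion₂.1 hy
    exact ⟨x, hx, mem_closedBall.1 hyx⟩
  -- pointwise bounds
  have hbd : ∀ x, x ∈ U → ∃ C, ∀ k, |fk k x| ≤ C := by
    intro x hx
    obtain ⟨C, hC⟩ := ((hpt x hx).abs).bddAbove_range
    exact ⟨C, fun k => hC (Set.mem_range_self k)⟩
  choose! C hC using hbd
  -- uniform upper bound on the δ-thickening
  obtain ⟨M₄, hM₄⟩ := aux_upper_compact hUopen fk hconv C hC (hK.cthickening) hsubU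
    ⟨y₀, self_subset_cthickening K hy₀⟩
  -- uniform lower bound on the 2r-thickening
  have hT2compact : IsCompact (cthickening (2*r) K) := hK.cthickening
  obtain ⟨t, htT2, hcov⟩ := hT2compact.elim_nhds_subcover (fun x => ball x r)
    (fun x _ => ball_mem_nhds x hr)
  have hy₀T2 : y₀ ∈ cthickening (2*r) K := self_subset_cthickening K hy₀
  have htne : t.Nonempty := by
    obtain ⟨c, hc⟩ := Set.mem_iUnion₂.1 (hcov hy₀T2)
    exact ⟨c, hc.1⟩
  set B := t.sup' htne C with hB
  have hlow : ∀ k, ∀ y ∈ cthickening (2*r) K, -(2*B + M₄) ≤ fk k y := by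
    intro k y hy
    obtain ⟨c, hc, hyc⟩ := Set.mem_iUnion₂.1 (hcov hy)
    have hcT2 : c ∈ cthickening (2*r) K := htT2 c hc
    set z : Fin n → ℝ := c + (c - y) with hzdef
    have hdzc : dist z c ≤ r := by
      rw [dist_eq_norm]
      have : z - c = c - y := by rw [hzdef]; abel
      rw [this, ← dist_eq_norm]
      exact le_of_lt (mem_ball'.1 hyc)
    have hzT3 : z ∈ cthickening (3*r) K := by
      obtain ⟨x, hx, hcx⟩ := hext (2*r) (by positivity) c hcT2
      exact mem_cthickening_of_dist_le z x (3*r) K hx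
        (by calc dist z x ≤ dist z c + dist c x := dist_triangle _ _ _
              _ ≤ 3*r := by linarith)
    have hzU : z ∈ U := hTsub (3*r) (by rw [hrdef]; linarith) hzT3
    have hyU : y ∈ U := hTsub (2*r) (by rw [hrdef]; linarith) hy
    have hcU : c ∈ U := hTsub (2*r) (by rw [hrdef]; linarith) hcT2
    have hmid : (1/2 : ℝ) • y + (1/2 : ℝ) • z = c := by
      rw [hzdef]; ext i
      simp only [Pi.add_apply, Pi.smul_apply, Pi.sub_apply, smul_eq_mul]
      ring
    have hcvx := (hconv k).2 hyU hzU (by norm_num : (0:ℝ) ≤ 1/2)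
      (by norm_num : (0:ℝ) ≤ 1/2) (by norm_num)
    rw [hmid] at hcvx
    simp only [smul_eq_mul] at hcvx
    have h1 : fk k z ≤ M₄ := hM₄ k z (cthickening_mono (by rw [hrdef]; linarith) K hzT3)
    have h2 : -(C c) ≤ fk k c := neg_le_of_abs_le (hC c hcU k)
    have h3 : C c ≤ B := Finset.le_sup' C hc
    linarith
  -- two-sided bound on the 2r-thickening
  set M₀ := max M₄ (2*B + M₄) with hM₀def
  have habs : ∀ k, ∀ y ∈ cthickening (2*r) K, |fk k y| ≤ M₀ := by
    intro k y hy
    rw [abs_le]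
    constructor
    · have := hlow k y hy
      have h2 : 2*B + M₄ ≤ M₀ := le_max_right _ _
      linarith
    · exact (hM₄ k y (cthickening_mono (by rw [hrdef]; linarith) K hy)).trans (le_max_left _ _)
  have hM₀ : 0 ≤ M₀ := (abs_nonneg _).trans (habs 0 y₀ hy₀T2)
  set L := 2*M₀/r with hLdef
  have hL0 : 0 ≤ L := by positivity
  -- equi-Lipschitz estimate on the r-thickening
  have key : ∀ k, ∀ y ∈ cthickening r K, ∀ z ∈ cthickening r K,
      fk k z - fk k y ≤ L * dist z y := by
    intro k y hyT z hzT
    rcases eq_or_ne z y with rfl | hne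
    · simp
    have hd : 0 < dist z y := dist_pos.2 hne
    set d := dist z y with hddef
    set w : Fin n → ℝ := z + (r/d) • (z - y) with hwdef
    have hwz : dist w z = r := by
      rw [dist_eq_norm]
      have : w - z = (r/d) • (z - y) := by rw [hwdef]; abel
      rw [this, norm_smul, Real.norm_eq_abs, abs_of_pos (by positivity), ← dist_eq_norm,
        ← hddef]
      field_simp
    have hwT2 : w ∈ cthickening (2*r) K := by
      obtain ⟨x, hx, hzx⟩ := hext r hr.le z hzT
      exact mem_cthickening_of_dist_le w x (2*r) K hx
        (by calc dist w x ≤ dist w z + dist z x := dist_triangle _ _ _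
              _ ≤ 2*r := by rw [hwz]; linarith)
    have hyU : y ∈ U := hTsub r (by rw [hrdef]; linarith) hyT
    have hwU : w ∈ U := hTsub (2*r) (by rw [hrdef]; linarith) hwT2
    set a := r/(d+r) with hadef
    set b := d/(d+r) with hbdef
    have hdr : 0 < d + r := by linarith
    have ha0 : 0 ≤ a := by positivity
    have hb0 : 0 ≤ b := by positivity
    have hab : a + b = 1 := by rw [hadef, hbdef]; field_simp; ring
    have hzeq : a • y + b • w = z := by
      rw [hwdef, hadef, hbdef]; ext i
      simp only [Pi.add_apply, Pi.smul_apply, Pi.sub_apply, smul_eq_mul]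
      field_simp
      ring
    have hcvx := (hconv k).2 hyU hwU ha0 hb0 hab
    rw [hzeq] at hcvx
    simp only [smul_eq_mul] at hcvx
    have ha1 : a = 1 - b := by linarith
    rw [ha1] at hcvx
    have hw1 : fk k w ≤ M₀ := le_of_abs_le (habs k w hwT2)
    have hy1 : -M₀ ≤ fk k y :=
      neg_le_of_abs_le (habs k y (cthickening_mono (by linarith) K hyT))
    have hstep : fk k z - fk k y ≤ b * (fk k w - fk k y) := by nlinarith [hcvx]
    have hb2 : b * (fk k w - fk k y) ≤ b * (2*M₀) :=
      mul_le_mul_of_nonneg_left (by linarith) hb0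
    have hbr : b * r ≤ d := by
      rw [hbdef, div_mul_eq_mul_div, div_le_iff₀ hdr]
      nlinarith
    have hLd : L * d = 2*M₀*d/r := by rw [hLdef]; ring
    have hfin : b * (2*M₀) ≤ 2*M₀*d/r := by
      rw [le_div_iff₀ hr]
      nlinarith [mul_le_mul_of_nonneg_right hbr (by linarith : (0:ℝ) ≤ 2*M₀)]
    linarith
  have hLip : ∀ k, ∀ y ∈ cthickening r K, ∀ z ∈ cthickening r K,
      |fk k z - fk k y| ≤ L * dist z y := by
    intro k y hy z hz
    rw [abs_sub_le_iff]
    exact ⟨key k y hy z hz, by rw [dist_comm]; exact key k z hz y hy⟩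
  have hTrU : cthickening r K ⊆ U := hTsub r (by rw [hrdef]; linarith)
  have hLipf : ∀ y ∈ cthickening r K, ∀ z ∈ cthickening r K,
      |f z - f y| ≤ L * dist z y := by
    intro y hy z hz
    have htd : Tendsto (fun k => |fk k z - fk k y|) atTop (nhds |f z - f y|) :=
      ((hpt z (hTrU hz)).sub (hpt y (hTrU hy))).abs
    exact le_of_tendsto htd (Filter.Eventually.of_forall fun k => hLip k y hy z hz)
  -- conclusion via an ε-net
  rw [Metric.tendstoUniformlyOn_iff]
  intro ε hε
  have hL1 : 0 < L + 1 := by linarith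
  set η := min r (ε/(3*(L+1))) with hηdef
  have hη : 0 < η := lt_min hr (by positivity)
  obtain ⟨s, hsK, hscov⟩ := hK.elim_nhds_subcover (fun x => ball x η)
    (fun x _ => ball_mem_nhds x hη)
  have hev : ∀ᶠ k in atTop, ∀ c ∈ s, dist (fk k c) (f c) < ε/3 := by
    rw [Filter.eventually_all_finset]
    intro c hc
    exact (Metric.tendsto_nhds.1 (hpt c (hKU (hsK c hc)))) (ε/3) (by positivity)
  filter_upwards [hev] with k hk y hy
  obtain ⟨c, hc, hyc⟩ := Set.mem_iUnion₂.1 (hscov hy)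
  have hyTr : y ∈ cthickening r K := self_subset_cthickening K hy
  have hcTr : c ∈ cthickening r K := self_subset_cthickening K (hsK c hc)
  have hd1 : |f y - f c| ≤ L * dist y c := hLipf c hcTr y hyTr
  have hd2 : |fk k y - fk k c| ≤ L * dist y c := hLip k c hcTr y hyTr
  have hdyc : dist y c ≤ ε/(3*(L+1)) :=
    le_trans (le_of_lt (mem_ball.1 hyc)) (min_le_right _ _)
  have hLd : L * dist y c ≤ ε/3 := by
    have h1 : L * dist y c ≤ L * (ε/(3*(L+1))) :=
      mul_le_mul_of_nonneg_left hdyc hL0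
    have h2 : L * (ε/(3*(L+1))) ≤ (L+1) * (ε/(3*(L+1))) :=
      mul_le_mul_of_nonneg_right (by linarith) (by positivity)
    have h3 : (L+1) * (ε/(3*(L+1))) = ε/3 := by field_simp
    linarith
  have htri : dist (f y) (fk k y) ≤
      dist (f y) (f c) + dist (f c) (fk k c) + dist (fk k c) (fk k y) :=
    dist_triangle4 _ _ _ _
  have e1 : dist (f y) (f c) ≤ ε/3 := by
    rw [Real.dist_eq]
    calc |f y - f c| ≤ L * dist y c := hd1
      _ ≤ ε/3 := hLd
  have e2 : dist (f c) (fk k c) < ε/3 := by rw [dist_comm]; exact hk c hc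
  have e3 : dist (fk k c) (fk k y) ≤ ε/3 := by
    rw [dist_comm, Real.dist_eq]
    calc |fk k y - fk k c| ≤ L * dist y c := hd2
      _ ≤ ε/3 := hLd
  linarith
end
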